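/- arXiv:2304.02596 — 2 statements merged into one kernel-verified Lean document; each statement's English description precedes it below -/
import Mathlib

section
/- Normalization for the immediate grounding and grounding tree rules: in the calculus over an arbitrary immediate grounding relation R consisting of the hypothesis rule, the grounding rule, the ▶-introduction and ▶-elimination rules, and the ▷-introduction and ▷-elimination rules, every derivation reduces to a normal derivation (one containing no redex) in finitely many detour-reduction steps; indeed every detour reduction strictly decreases the number of rule applications in the derivation, so the detour-reduction relation is strongly normalizing. -/
inductive GTree (α : Type*) : Type _ where
  | mk (grounds : List (α ⊕ GTree α)) (conds : List (α ⊕ GTree α)) (concl : α)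

namespace GTree
variable {α : Type*}

def concl : GTree α → α
  | .mk _ _ b => b

end GTree

/-- The language extended by grounding claims: `Sum.inl a` is the plain formula `a`
(written `fm a`) and `Sum.inr t` is the grounding claim expressed by the grounding
tree `t` (written `tr t`). -/
abbrev EForm (α : Type*) := α ⊕ GTree α

/-- Derivations from a set `H` of hypotheses in the calculus consisting of the
hypothesis rule, the grounding rule, the ▶-introduction and ▶-elimination rules, and
the ▷-introduction and ▷-elimination rules over the immediate grounding relation `R`. -/
inductive Der {α : Type*} (R : List α → List α → α → Prop) (H : Set (EForm α)) :
    EForm α → Type _ where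
  | hyp {e : EForm α} : e ∈ H → Der R H e
  | rule {Γ Δ : List α} {B : α} :
      R Γ Δ B → (∀ a ∈ Γ ++ Δ, Der R H (Sum.inl a)) → Der R H (Sum.inl B)
  | introB {Γ Δ : List α} {B : α} :
      R Γ Δ B → (∀ a ∈ Γ ++ Δ, Der R H (Sum.inl a)) →
      Der R H (Sum.inr (.mk (Γ.map Sum.inl) (Δ.map Sum.inl) B))
  | elimBc {G C : List (α ⊕ GTree α)} {B : α} :
      Der R H (Sum.inr (.mk G C B)) → Der R H (Sum.inl B)
  | elimBg {G C : List (α ⊕ GTree α)} {B a : α} :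
      Der R H (Sum.inr (.mk G C B)) → Sum.inl a ∈ G → Der R H (Sum.inl a)
  | elimBd {G C : List (α ⊕ GTree α)} {B c : α} :
      Der R H (Sum.inr (.mk G C B)) → Sum.inl c ∈ C → Der R H (Sum.inl c)
  | introTg {s : GTree α} {Γ₁ Γ₂ Ξ : List (α ⊕ GTree α)} {B : α} :
      Der R H (Sum.inr s) → Der R H (Sum.inr (.mk (Γ₁ ++ [Sum.inl s.concl] ++ Γ₂) Ξ B)) →
      Der R H (Sum.inr (.mk (Γ₁ ++ [Sum.inr s] ++ Γ₂) Ξ B))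
  | introTc {s : GTree α} {Γ Ξ₁ Ξ₂ : List (α ⊕ GTree α)} {B : α} :
      Der R H (Sum.inr s) → Der R H (Sum.inr (.mk Γ (Ξ₁ ++ [Sum.inl s.concl] ++ Ξ₂) B)) →
      Der R H (Sum.inr (.mk Γ (Ξ₁ ++ [Sum.inr s] ++ Ξ₂) B))
  | elimTg1 {s : GTree α} {Γ₁ Γ₂ Ξ : List (α ⊕ GTree α)} {B : α} :
      Der R H (Sum.inr (.mk (Γ₁ ++ [Sum.inr s] ++ Γ₂) Ξ B)) → Der R H (Sum.inr s)
  | elimTg2 {s : GTree α} {Γ₁ Γ₂ Ξ : List (α ⊕ GTree α)} {B : α} :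
      Der R H (Sum.inr (.mk (Γ₁ ++ [Sum.inr s] ++ Γ₂) Ξ B)) →
      Der R H (Sum.inr (.mk (Γ₁ ++ [Sum.inl s.concl] ++ Γ₂) Ξ B))
  | elimTc1 {s : GTree α} {Γ Ξ₁ Ξ₂ : List (α ⊕ GTree α)} {B : α} :
      Der R H (Sum.inr (.mk Γ (Ξ₁ ++ [Sum.inr s] ++ Ξ₂) B)) → Der R H (Sum.inr s)
  | elimTc2 {s : GTree α} {Γ Ξ₁ Ξ₂ : List (α ⊕ GTree α)} {B : α} :
      Der R H (Sum.inr (.mk Γ (Ξ₁ ++ [Sum.inr s] ++ Ξ₂) B)) →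
      Der R H (Sum.inr (.mk Γ (Ξ₁ ++ [Sum.inl s.concl] ++ Ξ₂) B))

namespace Der
variable {α : Type*} {R : List α → List α → α → Prop} {H : Set (EForm α)}

/-- Transport of a derivation along an equality of conclusions. -/
def cast {e e' : EForm α} (d : Der R H e) (h : e = e') : Der R H e' := h ▸ d

/-- The number of rule applications in a derivation.  A ▶-introduction counts as two
rule applications, since it represents a ▶-introduction applied immediately below the
corresponding grounding rule application. -/
def size : ∀ {e : EForm α}, Der R H e → ℕ
  | _, .hyp _ => 0
  | _, @Der.rule _ _ _ Γ Δ _ _ f =>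
      1 + ((Γ ++ Δ).attach.map (fun x => size (f x.1 x.2))).sum
  | _, @Der.introB _ _ _ Γ Δ _ _ f =>
      2 + ((Γ ++ Δ).attach.map (fun x => size (f x.1 x.2))).sum
  | _, .elimBc d => 1 + size d
  | _, .elimBg d _ => 1 + size d
  | _, .elimBd d _ => 1 + size d
  | _, .introTg d₁ d₂ => 1 + size d₁ + size d₂
  | _, .introTc d₁ d₂ => 1 + size d₁ + size d₂
  | _, .elimTg1 d => 1 + size d
  | _, .elimTg2 d => 1 + size d
  | _, .elimTc1 d => 1 + size d
  | _, .elimTc2 d => 1 + size d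

end Der
section
variable {α : Type*} (R : List α → List α → α → Prop) (H : Set (EForm α))

/-- One-step detour reduction: `Red R H d d'` holds when `d'` is obtained from `d` by
replacing one redex subderivation of `d` by its contractum. -/
inductive Red : ∀ {e : EForm α}, Der R H e → Der R H e → Prop where
  /- ▶-detour contractions -/
  | redBc {Γ Δ : List α} {B : α} (hR : R Γ Δ B)
      (f : ∀ a ∈ Γ ++ Δ, Der R H (Sum.inl a)) :
      Red (Der.elimBc (Der.introB hR f)) (Der.rule hR f)
  | redBg {Γ Δ : List α} {B : α} (hR : R Γ Δ B)
      (f : ∀ a ∈ Γ ++ Δ, Der R H (Sum.inl a)) {a : α}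
      (h : Sum.inl a ∈ Γ.map Sum.inl) (h' : a ∈ Γ ++ Δ) :
      Red (Der.elimBg (Der.introB hR f) h) (f a h')
  | redBd {Γ Δ : List α} {B : α} (hR : R Γ Δ B)
      (f : ∀ a ∈ Γ ++ Δ, Der R H (Sum.inl a)) {c : α}
      (h : Sum.inl c ∈ Δ.map Sum.inl) (h' : c ∈ Γ ++ Δ) :
      Red (Der.elimBd (Der.introB hR f) h) (f c h')
  /- ▷-detour contractions: a ▷-elimination applied to a ▷-introduction reduces to the
  premiss derivation whose conclusion it has, or to a single ▷-elimination applied to a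
  premiss derivation when its conclusion is one ▷-elimination away from its conclusion. -/
  | redTg1 {s : GTree α} {Γ₁ Γ₂ Ξ : List (α ⊕ GTree α)} {B : α}
      (d₁ : Der R H (Sum.inr s))
      (d₂ : Der R H (Sum.inr (.mk (Γ₁ ++ [Sum.inl s.concl] ++ Γ₂) Ξ B))) :
      Red (Der.elimTg1 (s := s) (Γ₁ := Γ₁) (Γ₂ := Γ₂) (Der.introTg d₁ d₂)) d₁
  | redTg2 {s : GTree α} {Γ₁ Γ₂ Ξ : List (α ⊕ GTree α)} {B : α}
      (d₁ : Der R H (Sum.inr s))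
      (d₂ : Der R H (Sum.inr (.mk (Γ₁ ++ [Sum.inl s.concl] ++ Γ₂) Ξ B))) :
      Red (Der.elimTg2 (s := s) (Γ₁ := Γ₁) (Γ₂ := Γ₂) (Der.introTg d₁ d₂)) d₂
  | redTc1 {s : GTree α} {Γ Ξ₁ Ξ₂ : List (α ⊕ GTree α)} {B : α}
      (d₁ : Der R H (Sum.inr s))
      (d₂ : Der R H (Sum.inr (.mk Γ (Ξ₁ ++ [Sum.inl s.concl] ++ Ξ₂) B))) :
      Red (Der.elimTc1 (s := s) (Ξ₁ := Ξ₁) (Ξ₂ := Ξ₂) (Der.introTc d₁ d₂)) d₁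
  | redTc2 {s : GTree α} {Γ Ξ₁ Ξ₂ : List (α ⊕ GTree α)} {B : α}
      (d₁ : Der R H (Sum.inr s))
      (d₂ : Der R H (Sum.inr (.mk Γ (Ξ₁ ++ [Sum.inl s.concl] ++ Ξ₂) B))) :
      Red (Der.elimTc2 (s := s) (Ξ₁ := Ξ₁) (Ξ₂ := Ξ₂) (Der.introTc d₁ d₂)) d₂
  | redTg1Tg_left {s u : GTree α} {A₁ A₂ Γ₂ Ξ : List (α ⊕ GTree α)} {B : α}
      (d₁ : Der R H (Sum.inr s))
      (d₂ : Der R H (Sum.inr (.mk (A₁ ++ [Sum.inr u] ++ A₂ ++ [Sum.inl s.concl] ++ Γ₂) Ξ B))) :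
      Red (Der.elimTg1 (s := u) (Γ₁ := A₁) (Γ₂ := A₂ ++ [Sum.inr s] ++ Γ₂) (Ξ := Ξ) (B := B)
            ((Der.introTg (s := s) (Γ₁ := A₁ ++ [Sum.inr u] ++ A₂) (Γ₂ := Γ₂) d₁ d₂).cast
              (by simp)))
          (Der.elimTg1 (s := u) (Γ₁ := A₁) (Γ₂ := A₂ ++ [Sum.inl s.concl] ++ Γ₂) (Ξ := Ξ) (B := B)
            (d₂.cast (by simp)))
  | redTg1Tg_right {s u : GTree α} {Γ₁ A₁ A₂ Ξ : List (α ⊕ GTree α)} {B : α}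
      (d₁ : Der R H (Sum.inr s))
      (d₂ : Der R H (Sum.inr (.mk (Γ₁ ++ [Sum.inl s.concl] ++ (A₁ ++ [Sum.inr u] ++ A₂)) Ξ B))) :
      Red (Der.elimTg1 (s := u) (Γ₁ := Γ₁ ++ [Sum.inr s] ++ A₁) (Γ₂ := A₂) (Ξ := Ξ) (B := B)
            ((Der.introTg (s := s) (Γ₁ := Γ₁) (Γ₂ := A₁ ++ [Sum.inr u] ++ A₂) d₁ d₂).cast
              (by simp)))
          (Der.elimTg1 (s := u) (Γ₁ := Γ₁ ++ [Sum.inl s.concl] ++ A₁) (Γ₂ := A₂) (Ξ := Ξ) (B := B)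
            (d₂.cast (by simp)))
  | redTg1Tc {s u : GTree α} {A₁ A₂ Ξ₁ Ξ₂ : List (α ⊕ GTree α)} {B : α}
      (d₁ : Der R H (Sum.inr s))
      (d₂ : Der R H (Sum.inr (.mk (A₁ ++ [Sum.inr u] ++ A₂) (Ξ₁ ++ [Sum.inl s.concl] ++ Ξ₂) B))) :
      Red (Der.elimTg1 (s := u) (Γ₁ := A₁) (Γ₂ := A₂) (Der.introTc d₁ d₂))
          (Der.elimTg1 (s := u) (Γ₁ := A₁) (Γ₂ := A₂) d₂)
  | redTc1Tg {s u : GTree α} {Γ₁ Γ₂ X₁ X₂ : List (α ⊕ GTree α)} {B : α}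
      (d₁ : Der R H (Sum.inr s))
      (d₂ : Der R H (Sum.inr (.mk (Γ₁ ++ [Sum.inl s.concl] ++ Γ₂) (X₁ ++ [Sum.inr u] ++ X₂) B))) :
      Red (Der.elimTc1 (s := u) (Ξ₁ := X₁) (Ξ₂ := X₂) (Der.introTg d₁ d₂))
          (Der.elimTc1 (s := u) (Ξ₁ := X₁) (Ξ₂ := X₂) d₂)
  | redTc1Tc_left {s u : GTree α} {Γ X₁ X₂ Ξ₂ : List (α ⊕ GTree α)} {B : α}
      (d₁ : Der R H (Sum.inr s))
      (d₂ : Der R H (Sum.inr (.mk Γ (X₁ ++ [Sum.inr u] ++ X₂ ++ [Sum.inl s.concl] ++ Ξ₂) B))) :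
      Red (Der.elimTc1 (s := u) (Γ := Γ) (Ξ₁ := X₁) (Ξ₂ := X₂ ++ [Sum.inr s] ++ Ξ₂) (B := B)
            ((Der.introTc (s := s) (Ξ₁ := X₁ ++ [Sum.inr u] ++ X₂) (Ξ₂ := Ξ₂) d₁ d₂).cast
              (by simp)))
          (Der.elimTc1 (s := u) (Γ := Γ) (Ξ₁ := X₁) (Ξ₂ := X₂ ++ [Sum.inl s.concl] ++ Ξ₂) (B := B)
            (d₂.cast (by simp)))
  | redTc1Tc_right {s u : GTree α} {Γ Ξ₁ X₁ X₂ : List (α ⊕ GTree α)} {B : α}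
      (d₁ : Der R H (Sum.inr s))
      (d₂ : Der R H (Sum.inr (.mk Γ (Ξ₁ ++ [Sum.inl s.concl] ++ (X₁ ++ [Sum.inr u] ++ X₂)) B))) :
      Red (Der.elimTc1 (s := u) (Γ := Γ) (Ξ₁ := Ξ₁ ++ [Sum.inr s] ++ X₁) (Ξ₂ := X₂) (B := B)
            ((Der.introTc (s := s) (Ξ₁ := Ξ₁) (Ξ₂ := X₁ ++ [Sum.inr u] ++ X₂) d₁ d₂).cast
              (by simp)))
          (Der.elimTc1 (s := u) (Γ := Γ) (Ξ₁ := Ξ₁ ++ [Sum.inl s.concl] ++ X₁) (Ξ₂ := X₂) (B := B)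
            (d₂.cast (by simp)))
  /- congruence: reduction of one premiss subderivation -/
  | congRule {Γ Δ : List α} {B : α} (hR : R Γ Δ B)
      (f g : ∀ a ∈ Γ ++ Δ, Der R H (Sum.inl a)) (a₀ : α) (h₀ : a₀ ∈ Γ ++ Δ) :
      Red (f a₀ h₀) (g a₀ h₀) → (∀ a (h : a ∈ Γ ++ Δ), a ≠ a₀ → f a h = g a h) →
      Red (Der.rule hR f) (Der.rule hR g)
  | congIntroB {Γ Δ : List α} {B : α} (hR : R Γ Δ B)
      (f g : ∀ a ∈ Γ ++ Δ, Der R H (Sum.inl a)) (a₀ : α) (h₀ : a₀ ∈ Γ ++ Δ) :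
      Red (f a₀ h₀) (g a₀ h₀) → (∀ a (h : a ∈ Γ ++ Δ), a ≠ a₀ → f a h = g a h) →
      Red (Der.introB hR f) (Der.introB hR g)
  | congElimBc {G C : List (α ⊕ GTree α)} {B : α}
      {d d' : Der R H (Sum.inr (.mk G C B))} :
      Red d d' → Red (Der.elimBc d) (Der.elimBc d')
  | congElimBg {G C : List (α ⊕ GTree α)} {B a : α}
      {d d' : Der R H (Sum.inr (.mk G C B))} (h : Sum.inl a ∈ G) :
      Red d d' → Red (Der.elimBg d h) (Der.elimBg d' h)
  | congElimBd {G C : List (α ⊕ GTree α)} {B c : α}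
      {d d' : Der R H (Sum.inr (.mk G C B))} (h : Sum.inl c ∈ C) :
      Red d d' → Red (Der.elimBd d h) (Der.elimBd d' h)
  | congIntroTgL {s : GTree α} {Γ₁ Γ₂ Ξ : List (α ⊕ GTree α)} {B : α}
      {d₁ d₁' : Der R H (Sum.inr s)}
      (d₂ : Der R H (Sum.inr (.mk (Γ₁ ++ [Sum.inl s.concl] ++ Γ₂) Ξ B))) :
      Red d₁ d₁' → Red (Der.introTg d₁ d₂) (Der.introTg d₁' d₂)
  | congIntroTgR {s : GTree α} {Γ₁ Γ₂ Ξ : List (α ⊕ GTree α)} {B : α}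
      (d₁ : Der R H (Sum.inr s))
      {d₂ d₂' : Der R H (Sum.inr (.mk (Γ₁ ++ [Sum.inl s.concl] ++ Γ₂) Ξ B))} :
      Red d₂ d₂' → Red (Der.introTg d₁ d₂) (Der.introTg d₁ d₂')
  | congIntroTcL {s : GTree α} {Γ Ξ₁ Ξ₂ : List (α ⊕ GTree α)} {B : α}
      {d₁ d₁' : Der R H (Sum.inr s)}
      (d₂ : Der R H (Sum.inr (.mk Γ (Ξ₁ ++ [Sum.inl s.concl] ++ Ξ₂) B))) :
      Red d₁ d₁' → Red (Der.introTc d₁ d₂) (Der.introTc d₁' d₂)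
  | congIntroTcR {s : GTree α} {Γ Ξ₁ Ξ₂ : List (α ⊕ GTree α)} {B : α}
      (d₁ : Der R H (Sum.inr s))
      {d₂ d₂' : Der R H (Sum.inr (.mk Γ (Ξ₁ ++ [Sum.inl s.concl] ++ Ξ₂) B))} :
      Red d₂ d₂' → Red (Der.introTc d₁ d₂) (Der.introTc d₁ d₂')
  | congElimTg1 {s : GTree α} {Γ₁ Γ₂ Ξ : List (α ⊕ GTree α)} {B : α}
      {d d' : Der R H (Sum.inr (.mk (Γ₁ ++ [Sum.inr s] ++ Γ₂) Ξ B))} :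
      Red d d' → Red (Der.elimTg1 d) (Der.elimTg1 d')
  | congElimTg2 {s : GTree α} {Γ₁ Γ₂ Ξ : List (α ⊕ GTree α)} {B : α}
      {d d' : Der R H (Sum.inr (.mk (Γ₁ ++ [Sum.inr s] ++ Γ₂) Ξ B))} :
      Red d d' → Red (Der.elimTg2 d) (Der.elimTg2 d')
  | congElimTc1 {s : GTree α} {Γ Ξ₁ Ξ₂ : List (α ⊕ GTree α)} {B : α}
      {d d' : Der R H (Sum.inr (.mk Γ (Ξ₁ ++ [Sum.inr s] ++ Ξ₂) B))} :
      Red d d' → Red (Der.elimTc1 d) (Der.elimTc1 d')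
  | congElimTc2 {s : GTree α} {Γ Ξ₁ Ξ₂ : List (α ⊕ GTree α)} {B : α}
      {d d' : Der R H (Sum.inr (.mk Γ (Ξ₁ ++ [Sum.inr s] ++ Ξ₂) B))} :
      Red d d' → Red (Der.elimTc2 d) (Der.elimTc2 d')

end

/-!
Every contraction replaces a redex by one of its proper subderivations, or by a single
▷-elimination applied to a proper subderivation of the ▷-introduction it eliminates, so it
removes at least one rule application; a reduction inside a premiss only changes that premiss.
Hence `Der.size` strictly decreases along reductions, which makes reduction well-founded, and a
normal form is reached by taking a `Red`-minimal element among the reducts of a derivation.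
-/

theorem Relation.exists_reflTransGen_not_exists {β : Type*} {r : β → β → Prop}
    (hwf : WellFounded (flip r)) (a : β) :
    ∃ b, Relation.ReflTransGen r a b ∧ ¬ ∃ c, r b c := by
  obtain ⟨b, hab, hmin⟩ := hwf.has_min {b | Relation.ReflTransGen r a b} ⟨a, .refl⟩
  exact ⟨b, hab, fun ⟨c, hbc⟩ => hmin c (hab.tail hbc) hbc⟩

namespace Der
variable {α : Type*} {R : List α → List α → α → Prop} {H : Set (EForm α)}

@[simp] lemma size_cast {e e' : EForm α} (d : Der R H e) (h : e = e') :
    (d.cast h).size = d.size := by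
  subst h; rfl

lemma size_le_sum_size {Γ Δ : List α} (f : ∀ a ∈ Γ ++ Δ, Der R H (Sum.inl a))
    {a : α} (h : a ∈ Γ ++ Δ) :
    (f a h).size ≤ ((Γ ++ Δ).attach.map fun x => (f x.1 x.2).size).sum :=
  List.le_sum_of_mem (List.mem_map.2 ⟨⟨a, h⟩, List.mem_attach _ _, rfl⟩)

lemma sum_size_lt_of_lt {Γ Δ : List α} {f g : ∀ a ∈ Γ ++ Δ, Der R H (Sum.inl a)}
    {a₀ : α} {h₀ : a₀ ∈ Γ ++ Δ} (hlt : (g a₀ h₀).size < (f a₀ h₀).size)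
    (heq : ∀ a (h : a ∈ Γ ++ Δ), a ≠ a₀ → f a h = g a h) :
    ((Γ ++ Δ).attach.map fun x => (g x.1 x.2).size).sum <
      ((Γ ++ Δ).attach.map fun x => (f x.1 x.2).size).sum := by
  apply List.sum_lt_sum
  · rintro ⟨a, h⟩ -
    by_cases ha : a = a₀
    · subst ha
      exact hlt.le
    · exact (congrArg size (heq a h ha)).ge
  · exact ⟨⟨a₀, h₀⟩, List.mem_attach _ _, hlt⟩

lemma size_lt_of_red {e : EForm α} {d d' : Der R H e} (r : Red R H d d') :
    d'.size < d.size := by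
  induction r with
  | redBg _ f _ h' | redBd _ f _ h' =>
    have := size_le_sum_size f h'
    simp only [size]
    omega
  | congRule _ _ _ _ _ _ heq ih | congIntroB _ _ _ _ _ _ heq ih =>
    have := sum_size_lt_of_lt ih heq
    simp only [size]
    omega
  | _ => simp only [size, size_cast] at *; omega

lemma wellFounded_red (e : EForm α) : WellFounded (flip (Red R H (e := e))) :=
  Subrelation.wf (fun r => size_lt_of_red r) (measure size).wf

end Der

theorem grounding_normalization {α : Type*} (R : List α → List α → α → Prop)
    (H : Set (EForm α)) :
    (∀ (e : EForm α) (d d' : Der R H e), Red R H d d' → d'.size < d.size) ∧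
    (∀ e : EForm α, WellFounded (fun d' d : Der R H e => Red R H d d')) ∧
    (∀ (e : EForm α) (d : Der R H e), ∃ d' : Der R H e,
        Relation.ReflTransGen (fun x y => Red R H x y) d d' ∧
        ¬ ∃ d'' : Der R H e, Red R H d' d'') := by
  exact ⟨fun _ _ _ => Der.size_lt_of_red, Der.wellFounded_red,
    fun e => Relation.exists_reflTransGen_not_exists (Der.wellFounded_red e)⟩
end

section
/- Mediate grounding as transitive closure: assume that every grounding rule instance has at least one ground, i.e., R Γ Δ B implies Γ ≠ []. Then for all formulas a, b : α, the mediate grounding claim MG [a] [] b holds if and only if Relation.TransGen (fun x y => R [x] [] y) a b holds; that is, on single-ground, condition-free claims the mediate grounding relation coincides with the transitive closure of the immediate grounding relation. -/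
/-!
Every derivation has a nonempty list of grounds, since the rules only ever enlarge the grounds of
the premiss they act on. Hence a derivation of a claim with a single ground and no conditions can
never end in a transitivity step on conditions (it would place a nonempty list among the
conditions), and a final transitivity step on grounds must substitute a single-ground claim for
the single ground of another condition-free claim; induction turns such a derivation into a chain
of immediate single-ground steps. Conversely, such a chain is composed by transitivity on grounds.
-/

/-- The mediate grounding relation generated by the immediate grounding relation `R`:
`MG R Γ Δ A` means that `Γ` is a mediate ground of `A` under the conditions `Δ`. -/
inductive MG {α : Type*} (R : List α → List α → α → Prop) : List α → List α → α → Prop where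
  | base {Γ Δ A} : R Γ Δ A → MG R Γ Δ A
  | transG {Γ Δ A Γ₁ Γ₂ Δ₁ B} :
      MG R Γ Δ A → MG R (Γ₁ ++ [A] ++ Γ₂) Δ₁ B → MG R (Γ₁ ++ Γ ++ Γ₂) (Δ ++ Δ₁) B
  | transC {Γ Δ A Γ₁ Δ₁ Δ₂ B} :
      MG R Γ Δ A → MG R Γ₁ (Δ₁ ++ [A] ++ Δ₂) B → MG R Γ₁ (Δ₁ ++ Γ ++ Δ ++ Δ₂) B

theorem List.eq_singleton_of_append_append_eq_singleton {α : Type*} {l₁ l l₂ : List α} {x : α}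
    (hl : l ≠ []) (h : l₁ ++ l ++ l₂ = [x]) : l₁ = [] ∧ l = [x] ∧ l₂ = [] := by
  simp only [List.append_eq_singleton_iff, List.append_eq_nil_iff] at h
  tauto

namespace MG

variable {α : Type*} {R : List α → List α → α → Prop}

theorem grounds_ne_nil (hR : ∀ (Γ Δ : List α) (B : α), R Γ Δ B → Γ ≠ []) {Γ Δ : List α} {B : α}
    (h : MG R Γ Δ B) : Γ ≠ [] := by
  induction h with
  | base h => exact hR _ _ _ h
  | transG _ _ ih _ => simp [ih]
  | transC _ _ _ ih => exact ih

theorem trans_singleton {a b c : α} (hab : MG R [a] [] b) (hbc : MG R [b] [] c) :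
    MG R [a] [] c :=
  transG (Γ₁ := []) (Γ₂ := []) hab hbc

theorem of_transGen {a b : α} (h : Relation.TransGen (fun x y => R [x] [] y) a b) :
    MG R [a] [] b := by
  induction h with
  | single h => exact base h
  | tail _ h ih => exact ih.trans_singleton (base h)

theorem transGen_of_singleton (hR : ∀ (Γ Δ : List α) (B : α), R Γ Δ B → Γ ≠ []) {a b : α}
    (h : MG R [a] [] b) : Relation.TransGen (fun x y => R [x] [] y) a b := by
  generalize hΓ : [a] = Γ at h
  generalize hΔ : ([] : List α) = Δ at h
  induction h generalizing a with
  | base h => subst hΓ hΔ; exact .single h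
  | @transG Γ Δ A Γ₁ Γ₂ Δ₁ B hA hB ihA ihB =>
    obtain ⟨rfl, rfl⟩ := List.append_eq_nil_iff.mp hΔ.symm
    obtain ⟨rfl, rfl, rfl⟩ :=
      List.eq_singleton_of_append_append_eq_singleton (hA.grounds_ne_nil hR) hΓ.symm
    exact (ihA rfl rfl).trans (ihB rfl rfl)
  | transC hA _ _ _ =>
    have hnil := congrArg List.isEmpty hΔ
    simp [hA.grounds_ne_nil hR] at hnil

end MG

theorem mg_eq_transGen_on_singletons {α : Type*} (R : List α → List α → α → Prop)
    (hR : ∀ (Γ Δ : List α) (B : α), R Γ Δ B → Γ ≠ []) (a b : α) :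
    MG R [a] [] b ↔ Relation.TransGen (fun x y => R [x] [] y) a b :=
  ⟨MG.transGen_of_singleton hR, MG.of_transGen⟩
end
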